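/- arXiv:2508.05573 — 2 statements merged into one kernel-verified Lean document; each statement's English description precedes it below -/
import Mathlib

section
/- Let u ∈ ℤ³ be primitive, i.e. the greatest common divisor of its three coordinates is 1, and let u^⊥ = {z ∈ ℤ³ : u · z = 0} be the orthogonal lattice. If (v, w) is a ℤ-basis of u^⊥, then u = v × w or u = −(v × w). Furthermore, there exist p, q ∈ ℤ³ such that (u, p, q) is a ℤ-basis of ℤ³ and v = u × p and w = u × q. -/
open Matrix

-- auxiliary pure identities
lemma trip_cyc (a b c : Fin 3 → ℤ) : a ⬝ᵥ crossProduct b c = c ⬝ᵥ crossProduct a b := by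
  rw [triple_product_permutation, triple_product_permutation b c a]

lemma ccross (v t w : Fin 3 → ℤ) :
    crossProduct (crossProduct v t) (crossProduct w t) = (t ⬝ᵥ crossProduct v w) • t := by
  funext i
  fin_cases i <;>
    simp [cross_apply, dotProduct, Fin.sum_univ_three, Pi.smul_apply] <;> ring

lemma double_cross (u v t : Fin 3 → ℤ) (ht : u ⬝ᵥ t = 1) (hv : u ⬝ᵥ v = 0) :
    crossProduct u (crossProduct v t) = v := by
  simp [dotProduct, Fin.sum_univ_three] at ht hv
  funext i
  fin_cases i <;> simp [cross_apply] <;> first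
    | linear_combination v 0 * ht - t 0 * hv
    | linear_combination v 1 * ht - t 1 * hv
    | linear_combination v 2 * ht - t 2 * hv

lemma key_expand (a b c z : Fin 3 → ℤ) :
    (a ⬝ᵥ crossProduct b c) • z =
      (z ⬝ᵥ crossProduct b c) • a + (z ⬝ᵥ crossProduct c a) • b + (z ⬝ᵥ crossProduct a b) • c := by
  funext i
  fin_cases i <;>
    simp [cross_apply, dotProduct, Fin.sum_univ_three] <;> ring

lemma det_rows (t v w : Fin 3 → ℤ) :
    (Matrix.of ![t, v, w]).det = t ⬝ᵥ crossProduct v w := by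
  rw [Matrix.det_fin_three]
  simp [cross_apply, dotProduct, Fin.sum_univ_three]
  ring

lemma dvd_cross_comp (k : ℤ) (u x : Fin 3 → ℤ) (h : ∀ i, k ∣ x i) :
    ∀ i, k ∣ crossProduct u x i := by
  intro i
  fin_cases i <;> simp only [cross_apply, Matrix.cons_val_zero, Matrix.cons_val_one,
    Matrix.head_cons, Matrix.cons_val_two, Matrix.tail_cons, Matrix.cons_val_fin_one,
    Fin.mk_one, Fin.mk_zero] <;>
    exact dvd_sub (Dvd.dvd.mul_left (h _) _) (Dvd.dvd.mul_left (h _) _)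

theorem statement10 (u : Fin 3 → ℤ)
    (hprim : Int.gcd (Int.gcd (u 0) (u 1)) (u 2) = 1)
    (v w : Fin 3 → ℤ)
    (hv : u ⬝ᵥ v = 0) (hw : u ⬝ᵥ w = 0)
    (hspan : ∀ z : Fin 3 → ℤ, u ⬝ᵥ z = 0 → ∃ a b : ℤ, z = a • v + b • w)
    (hindep : ∀ a b : ℤ, a • v + b • w = 0 → a = 0 ∧ b = 0) :
    (u = crossProduct v w ∨ u = -crossProduct v w) ∧
    ∃ p q : Fin 3 → ℤ,
      (∀ z : Fin 3 → ℤ, ∃! c : ℤ × ℤ × ℤ, z = c.1 • u + c.2.1 • p + c.2.2 • q) ∧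
      v = crossProduct u p ∧ w = crossProduct u q := by
  -- Bézout vector t with u ⬝ᵥ t = 1
  have hb1 := Int.gcd_eq_gcd_ab (u 0) (u 1)
  have hb2 : (1 : ℤ) = (Int.gcd (u 0) (u 1) : ℤ) * Int.gcdA (Int.gcd (u 0) (u 1)) (u 2)
      + u 2 * Int.gcdB (Int.gcd (u 0) (u 1)) (u 2) := by
    have h := Int.gcd_eq_gcd_ab ((Int.gcd (u 0) (u 1) : ℤ)) (u 2)
    rw [hprim] at h
    exact_mod_cast h
  obtain ⟨t, ht⟩ : ∃ t : Fin 3 → ℤ, u ⬝ᵥ t = 1 := by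
    refine ⟨![Int.gcdA (u 0) (u 1) * Int.gcdA (Int.gcd (u 0) (u 1)) (u 2),
      Int.gcdB (u 0) (u 1) * Int.gcdA (Int.gcd (u 0) (u 1)) (u 2),
      Int.gcdB (Int.gcd (u 0) (u 1)) (u 2)], ?_⟩
    simp only [dotProduct, Fin.sum_univ_three, Matrix.cons_val_zero,
      Matrix.cons_val_one, Matrix.head_cons, Matrix.cons_val_two, Matrix.tail_cons]
    linear_combination (-(Int.gcdA ((Int.gcd (u 0) (u 1) : ℤ)) (u 2))) * hb1 - hb2
  clear hb1 hb2 hprim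
  set k : ℤ := t ⬝ᵥ crossProduct v w with hkdef
  -- decomposition of standard basis vectors
  have hdec : ∀ i : Fin 3, ∃ a b : ℤ, Pi.single i 1 = u i • t + a • v + b • w := by
    intro i
    obtain ⟨a, b, h⟩ := hspan (Pi.single i 1 - u i • t) (by
      rw [dotProduct_sub, dotProduct_smul, dotProduct_single, ht]
      simp)
    refine ⟨a, b, ?_⟩
    have := sub_eq_iff_eq_add.mp h
    rw [this]; abel
  -- scalar triple products
  have htwt : t ⬝ᵥ crossProduct w t = 0 := by rw [trip_cyc]; exact dot_self_cross _ _
  have hvwt : v ⬝ᵥ crossProduct w t = k := by rw [trip_cyc]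
  have hwwt : w ⬝ᵥ crossProduct w t = 0 := by rw [trip_cyc, cross_self, dotProduct_zero]
  have htvt : t ⬝ᵥ crossProduct v t = 0 := by rw [trip_cyc]; exact dot_self_cross _ _
  have hvvt : v ⬝ᵥ crossProduct v t = 0 := by rw [trip_cyc, cross_self, dotProduct_zero]
  have hwvt : w ⬝ᵥ crossProduct v t = -k := by
    rw [trip_cyc, ← cross_anticomm, dotProduct_neg, hkdef]
  -- k divides components of w ×₃ t and v ×₃ t
  have hdvd : ∀ i : Fin 3, k ∣ crossProduct w t i ∧ k ∣ crossProduct v t i := by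
    intro i
    obtain ⟨a, b, h⟩ := hdec i
    constructor
    · have := congrArg (fun z => z ⬝ᵥ crossProduct w t) h
      simp only [single_dotProduct, one_mul, add_dotProduct, smul_dotProduct, smul_eq_mul,
        htwt, hvwt, hwwt, mul_zero, add_zero, zero_add] at this
      exact ⟨a, by linarith⟩
    · have := congrArg (fun z => z ⬝ᵥ crossProduct v t) h
      simp only [single_dotProduct, one_mul, add_dotProduct, smul_dotProduct, smul_eq_mul,
        htvt, hvvt, hwvt, mul_zero, add_zero, zero_add, mul_neg] at this
      exact ⟨-b, by linarith⟩
  -- hence k divides components of v and w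
  have hvdc := double_cross u v t ht hv
  have hwdc := double_cross u w t ht hw
  have hkv : ∀ i : Fin 3, k ∣ v i ∧ k ∣ w i := by
    intro i
    constructor
    · rw [← hvdc]
      exact dvd_cross_comp k u _ (fun j => (hdvd j).2) i
    · rw [← hwdc]
      exact dvd_cross_comp k u _ (fun j => (hdvd j).1) i
  -- k divides δ_ij - u i * t j
  have hkd : ∀ i j : Fin 3, k ∣ ((Pi.single i 1 : Fin 3 → ℤ) j - u i * t j) := by
    intro i j
    obtain ⟨a, b, h⟩ := hdec i
    have hj := congrFun h j
    simp only [Pi.add_apply, Pi.smul_apply, smul_eq_mul] at hj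
    rw [hj]
    have : u i * t j + a * v j + b * w j - u i * t j = a * v j + b * w j := by ring
    rw [this]
    exact dvd_add (Dvd.dvd.mul_left (hkv j).1 a) (Dvd.dvd.mul_left (hkv j).2 b)
  have hk1 : k ∣ 1 := by
    have d00 := hkd 0 0
    have d01 := hkd 0 1
    have d10 := hkd 1 0
    have d11 := hkd 1 1
    simp only [Pi.single_apply] at d00 d01 d10 d11
    norm_num at d00 d01 d10 d11
    have hcomb : (1 : ℤ) = (1 - u 0 * t 0) + (u 0 * t 0) * (1 - u 1 * t 1)
        + (u 0 * t 1) * (u 1 * t 0) := by ring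
    rw [hcomb]
    exact dvd_add (dvd_add d00 (Dvd.dvd.mul_left d11 _)) (Dvd.dvd.mul_left d10 _)
  have hk : k = 1 ∨ k = -1 := Int.isUnit_iff.mp (isUnit_of_dvd_one hk1)
  have hk2 : k * k = 1 := by rcases hk with h | h <;> rw [h] <;> norm_num
  -- v ×₃ w = k • u
  have hzn : ∀ z : Fin 3 → ℤ, z ⬝ᵥ crossProduct v w = (u ⬝ᵥ z) * k := by
    intro z
    obtain ⟨a, b, h⟩ := hspan (z - (u ⬝ᵥ z) • t) (by
      rw [dotProduct_sub, dotProduct_smul, ht]; simp)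
    have hz : z = (u ⬝ᵥ z) • t + (a • v + b • w) := by
      rw [← h]; abel
    conv_lhs => rw [hz]
    simp only [add_dotProduct, smul_dotProduct, smul_eq_mul, dot_self_cross, dot_cross_self,
      mul_zero, add_zero]
    rfl
  have hn : crossProduct v w = k • u := by
    funext i
    have := hzn (Pi.single i 1)
    rw [single_dotProduct, dotProduct_single] at this
    simp only [one_mul, mul_one] at this
    rw [this, Pi.smul_apply, smul_eq_mul, mul_comm]
  constructor
  · rcases hk with h | h
    · left; rw [hn, h, one_smul]
    · right; rw [hn, h]; funext i; simp
  · refine ⟨crossProduct v t, crossProduct w t, ?_, hvdc.symm, hwdc.symm⟩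
    set p : Fin 3 → ℤ := crossProduct v t with hpdef
    set q : Fin 3 → ℤ := crossProduct w t with hqdef
    have hpq : crossProduct p q = k • t := ccross v t w
    have hD : u ⬝ᵥ crossProduct p q = k := by
      rw [hpq, dotProduct_smul, ht]; simp
    have hppq : p ⬝ᵥ crossProduct p q = 0 := dot_self_cross _ _
    have hqpq : q ⬝ᵥ crossProduct p q = 0 := dot_cross_self _ _
    have huqu : u ⬝ᵥ crossProduct q u = 0 := by rw [trip_cyc]; exact dot_self_cross _ _
    have hpqu : p ⬝ᵥ crossProduct q u = k := by rw [trip_cyc]; exact hD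
    have hqqu : q ⬝ᵥ crossProduct q u = 0 := dot_self_cross _ _
    have huup : u ⬝ᵥ crossProduct u p = 0 := dot_self_cross _ _
    have hpup : p ⬝ᵥ crossProduct u p = 0 := dot_cross_self _ _
    have hqup : q ⬝ᵥ crossProduct u p = k := by rw [trip_cyc]; exact hpqu
    intro z
    refine ⟨(k * (z ⬝ᵥ crossProduct p q), k * (z ⬝ᵥ crossProduct q u),
      k * (z ⬝ᵥ crossProduct u p)), ?_, ?_⟩
    · have h := key_expand u p q z
      rw [hD] at h
      calc z = k • (k • z) := by rw [smul_smul, hk2, one_smul]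
        _ = k • ((z ⬝ᵥ crossProduct p q) • u + (z ⬝ᵥ crossProduct q u) • p
            + (z ⬝ᵥ crossProduct u p) • q) := by rw [h]
        _ = (k * (z ⬝ᵥ crossProduct p q)) • u + (k * (z ⬝ᵥ crossProduct q u)) • p
            + (k * (z ⬝ᵥ crossProduct u p)) • q := by
          simp only [smul_add, smul_smul]
    · rintro ⟨c1, c2, c3⟩ hc
      simp only at hc
      have hA : z ⬝ᵥ crossProduct p q = c1 * k := by
        rw [hc]
        simp only [add_dotProduct, smul_dotProduct, smul_eq_mul, hD, hppq, hqpq, mul_zero,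
          add_zero]
      have hB : z ⬝ᵥ crossProduct q u = c2 * k := by
        rw [hc]
        simp only [add_dotProduct, smul_dotProduct, smul_eq_mul, huqu, hpqu, hqqu, mul_zero,
          add_zero, zero_add]
      have hC : z ⬝ᵥ crossProduct u p = c3 * k := by
        rw [hc]
        simp only [add_dotProduct, smul_dotProduct, smul_eq_mul, huup, hpup, hqup, mul_zero,
          add_zero, zero_add]
      have e1 : c1 = k * (z ⬝ᵥ crossProduct p q) := by
        linear_combination (-k) * hA - c1 * hk2
      have e2 : c2 = k * (z ⬝ᵥ crossProduct q u) := by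
        linear_combination (-k) * hB - c2 * hk2
      have e3 : c3 = k * (z ⬝ᵥ crossProduct u p) := by
        linear_combination (-k) * hC - c3 * hk2
      simp only [Prod.mk.injEq]
      exact ⟨e1, e2, e3⟩
end

section
/- There exists a constant C depending only on the matrix A such that the following holds. Let θ be a cap (with center x_θ, Q(x_θ) = λ²) whose lattice Λ_θ has rank 2, let (u, v) be a ℤ-basis of Λ_θ and set w = u × v ∈ ℤ³. Then |w| · N_θ ≤ C λδ and |(A x_θ) × w| ≤ C (λδ)^{3/2} / N_θ, where |·| is the Euclidean norm and × the cross product. -/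
open Matrix

/-- The quadratic form `Q(x) = xᵀ A x`. -/
noncomputable def Qform (A : Matrix (Fin 3) (Fin 3) ℝ) (x : Fin 3 → ℝ) : ℝ :=
  ∑ i, ∑ j, A i j * x i * x j

/-- The Euclidean norm on `ℝ³`. -/
noncomputable def enorm3 (x : Fin 3 → ℝ) : ℝ := Real.sqrt (∑ i, x i ^ 2)

/-- Coercion of an integer vector to a real vector. -/
def intCast3 (k : Fin 3 → ℤ) : Fin 3 → ℝ := fun i => (k i : ℝ)

/-- The set of lattice points in the cap of the shell `S_{λ,δ}` centered at `x₀`. -/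
def capLattice (A : Matrix (Fin 3) (Fin 3) ℝ) (lam δ : ℝ) (x₀ : Fin 3 → ℝ) :
    Set (Fin 3 → ℤ) :=
  {k | |Real.sqrt (Qform A (intCast3 k)) - lam| < δ ∧
       enorm3 (intCast3 k - x₀) < Real.sqrt (lam * δ)}

/-- `N_θ`, the number of lattice points in the cap centered at `x₀`. -/
noncomputable def Ncap (A : Matrix (Fin 3) (Fin 3) ℝ) (lam δ : ℝ) (x₀ : Fin 3 → ℝ) : ℕ :=
  (capLattice A lam δ x₀).ncard

/-- `Λ_θ`, the subgroup of `ℤ³` generated by differences of lattice points of the cap. -/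
def capSpan (A : Matrix (Fin 3) (Fin 3) ℝ) (lam δ : ℝ) (x₀ : Fin 3 → ℝ) :
    Submodule ℤ (Fin 3 → ℤ) :=
  Submodule.span ℤ
    {d | ∃ y ∈ capLattice A lam δ x₀, ∃ z ∈ capLattice A lam δ x₀, d = y - z}

/-- A subset of `ℝ³` is an affine line. -/
def IsAffineLine (L : Set (Fin 3 → ℝ)) : Prop :=
  ∃ pt d : Fin 3 → ℝ, d ≠ 0 ∧ L = {x | ∃ t : ℝ, x = pt + t • d}

namespace S12

/-! ### Basic 3-dimensional vector algebra -/

def dot3 (x y : Fin 3 → ℝ) : ℝ := ∑ i, x i * y i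

lemma dot3_expand (x y : Fin 3 → ℝ) : dot3 x y = x 0 * y 0 + x 1 * y 1 + x 2 * y 2 := by
  simp [dot3, Fin.sum_univ_three]

lemma cross0 (a b : Fin 3 → ℝ) : crossProduct a b 0 = a 1 * b 2 - a 2 * b 1 := by
  rw [cross_apply]; rfl
lemma cross1 (a b : Fin 3 → ℝ) : crossProduct a b 1 = a 2 * b 0 - a 0 * b 2 := by
  rw [cross_apply]; rfl
lemma cross2 (a b : Fin 3 → ℝ) : crossProduct a b 2 = a 0 * b 1 - a 1 * b 0 := by
  rw [cross_apply]; rfl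

lemma lagrange (a b : Fin 3 → ℝ) :
    dot3 (crossProduct a b) (crossProduct a b) = dot3 a a * dot3 b b - (dot3 a b)^2 := by
  simp only [dot3_expand, cross0, cross1, cross2]; ring

lemma binet (g d c : Fin 3 → ℝ) :
    dot3 (crossProduct g c) (crossProduct d c) = dot3 g d * dot3 c c - dot3 g c * dot3 d c := by
  simp only [dot3_expand, cross0, cross1, cross2]; ring

lemma cyclic (a b c : Fin 3 → ℝ) : dot3 (crossProduct a b) c = dot3 a (crossProduct b c) := by
  simp only [dot3_expand, cross0, cross1, cross2]; ring

lemma crossswap (g d w : Fin 3 → ℝ) : dot3 g (crossProduct d w) = - dot3 g (crossProduct w d) := by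
  simp only [dot3_expand, cross0, cross1, cross2]; ring

lemma dot3_smul_right (x y : Fin 3 → ℝ) (r : ℝ) : dot3 x (r • y) = r * dot3 x y := by
  simp only [dot3_expand, Pi.smul_apply, smul_eq_mul]; ring

lemma dot3_zero_right (x : Fin 3 → ℝ) : dot3 x 0 = 0 := by
  simp [dot3_expand]

lemma keyid (g w d : Fin 3 → ℝ) (h : dot3 d w = 0) :
    dot3 d d * dot3 (crossProduct g w) (crossProduct g w)
      = (dot3 g (crossProduct w d))^2 + (dot3 g d)^2 * dot3 w w := by
  simp only [dot3_expand, cross0, cross1, cross2] at h ⊢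
  linear_combination ((d 0*w 0 + d 1*w 1 + d 2*w 2) * (g 0^2+g 1^2+g 2^2)
    - 2*(g 0*d 0+g 1*d 1+g 2*d 2)*(g 0*w 0+g 1*w 1+g 2*w 2)) * h

lemma dot3_self_nonneg (x : Fin 3 → ℝ) : 0 ≤ dot3 x x := by
  simp only [dot3_expand]; nlinarith [sq_nonneg (x 0), sq_nonneg (x 1), sq_nonneg (x 2)]

/-! ### Euclidean norm lemmas -/

lemma enorm3_eq (x : Fin 3 → ℝ) : enorm3 x = Real.sqrt (dot3 x x) := by
  unfold enorm3; congr 1; simp [dot3, sq]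

lemma enorm3_nonneg (x : Fin 3 → ℝ) : 0 ≤ enorm3 x := Real.sqrt_nonneg _

lemma enorm3_sq (x : Fin 3 → ℝ) : enorm3 x * enorm3 x = dot3 x x := by
  rw [enorm3_eq]; exact Real.mul_self_sqrt (dot3_self_nonneg x)

lemma cs3 (a b : Fin 3 → ℝ) : |dot3 a b| ≤ enorm3 a * enorm3 b := by
  have h := lagrange a b
  have h2 : (dot3 a b)^2 ≤ dot3 a a * dot3 b b := by
    nlinarith [dot3_self_nonneg (crossProduct a b)]
  have h3 : |dot3 a b| = Real.sqrt ((dot3 a b)^2) := (Real.sqrt_sq_eq_abs _).symm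
  rw [h3, enorm3_eq, enorm3_eq, ← Real.sqrt_mul (dot3_self_nonneg a)]
  exact Real.sqrt_le_sqrt h2

lemma enorm3_cross_le (a b : Fin 3 → ℝ) : enorm3 (crossProduct a b) ≤ enorm3 a * enorm3 b := by
  have h := lagrange a b
  rw [enorm3_eq]
  have hle : dot3 (crossProduct a b) (crossProduct a b)
      ≤ (enorm3 a * enorm3 b) * (enorm3 a * enorm3 b) := by
    have h1 := enorm3_sq a; have h2 := enorm3_sq b
    nlinarith [sq_nonneg (dot3 a b)]
  calc Real.sqrt (dot3 (crossProduct a b) (crossProduct a b))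
      ≤ Real.sqrt ((enorm3 a * enorm3 b) * (enorm3 a * enorm3 b)) := Real.sqrt_le_sqrt hle
    _ = enorm3 a * enorm3 b := Real.sqrt_mul_self (mul_nonneg (enorm3_nonneg a) (enorm3_nonneg b))

lemma dot3_le (a b : Fin 3 → ℝ) : dot3 a b ≤ enorm3 a * enorm3 b :=
  le_trans (le_abs_self _) (cs3 a b)

lemma enorm3_triangle (a b : Fin 3 → ℝ) : enorm3 (a + b) ≤ enorm3 a + enorm3 b := by
  rw [enorm3_eq]
  have hd : dot3 (a+b) (a+b) ≤ (enorm3 a + enorm3 b) * (enorm3 a + enorm3 b) := by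
    have h1 := enorm3_sq a; have h2 := enorm3_sq b; have h3 := dot3_le a b
    simp only [dot3_expand, Pi.add_apply] at *
    nlinarith
  calc Real.sqrt (dot3 (a+b) (a+b))
      ≤ Real.sqrt ((enorm3 a + enorm3 b) * (enorm3 a + enorm3 b)) := Real.sqrt_le_sqrt hd
    _ = enorm3 a + enorm3 b := Real.sqrt_mul_self (add_nonneg (enorm3_nonneg a) (enorm3_nonneg b))

lemma enorm3_sub_comm (a b : Fin 3 → ℝ) : enorm3 (a - b) = enorm3 (b - a) := by
  unfold enorm3; congr 1; apply Finset.sum_congr rfl; intro i _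
  simp only [Pi.sub_apply]; ring

lemma enorm3_sub3 (a b c : Fin 3 → ℝ) : enorm3 (a - c) ≤ enorm3 (a - b) + enorm3 (b - c) := by
  have h : a - c = (a - b) + (b - c) := by abel
  rw [h]; exact enorm3_triangle _ _

lemma enorm3_smul (r : ℝ) (x : Fin 3 → ℝ) : enorm3 (r • x) = |r| * enorm3 x := by
  rw [enorm3_eq, enorm3_eq]
  have h : dot3 (r • x) (r • x) = r^2 * dot3 x x := by
    simp only [dot3_expand, Pi.smul_apply, smul_eq_mul]; ring
  rw [h, Real.sqrt_mul (sq_nonneg r), Real.sqrt_sq_eq_abs]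

lemma intdot_cast (k l : Fin 3 → ℤ) :
    dot3 (intCast3 k) (intCast3 l) = ((∑ i, k i * l i : ℤ) : ℝ) := by
  simp [dot3, intCast3, Fin.sum_univ_three]

lemma int_nsq_ge_one {k : Fin 3 → ℤ} (hk : k ≠ 0) : (1:ℤ) ≤ ∑ i, k i * k i := by
  have h : k 0 ≠ 0 ∨ k 1 ≠ 0 ∨ k 2 ≠ 0 := by
    by_contra h; push_neg at h
    exact hk (funext fun j => by fin_cases j <;> simp [h.1, h.2.1, h.2.2])
  rw [Fin.sum_univ_three]
  rcases h with h|h|h <;>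
    nlinarith [Int.one_le_abs h, abs_mul_abs_self (k 0), abs_mul_abs_self (k 1),
      abs_mul_abs_self (k 2), mul_self_nonneg (k 0), mul_self_nonneg (k 1),
      mul_self_nonneg (k 2), abs_nonneg (k 0), abs_nonneg (k 1), abs_nonneg (k 2)]

lemma enorm3_int_ge_one {k : Fin 3 → ℤ} (hk : k ≠ 0) : 1 ≤ enorm3 (intCast3 k) := by
  rw [enorm3_eq, intdot_cast]
  have h := int_nsq_ge_one hk
  have h1 : (1:ℝ) ≤ ((∑ i, k i * k i : ℤ) : ℝ) := by exact_mod_cast h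
  nlinarith [Real.sq_sqrt (le_trans zero_le_one h1), Real.sqrt_nonneg ((∑ i, k i * k i : ℤ) : ℝ)]

lemma comp_le_enorm3 (x : Fin 3 → ℝ) (i : Fin 3) : |x i| ≤ enorm3 x := by
  rw [enorm3_eq]
  have h1 : x i * x i ≤ dot3 x x :=
    Finset.single_le_sum (f := fun k => x k * x k) (fun k _ => mul_self_nonneg (x k))
      (Finset.mem_univ i)
  have h2 : |x i| = Real.sqrt (x i * x i) := by
    rw [← Real.sqrt_mul_self (abs_nonneg (x i)), abs_mul_abs_self]
  rw [h2]; exact Real.sqrt_le_sqrt h1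

/-! ### Integer casting of cross products -/

lemma crossZ0 (a b : Fin 3 → ℤ) : crossProduct a b 0 = a 1 * b 2 - a 2 * b 1 := by
  rw [cross_apply]; rfl
lemma crossZ1 (a b : Fin 3 → ℤ) : crossProduct a b 1 = a 2 * b 0 - a 0 * b 2 := by
  rw [cross_apply]; rfl
lemma crossZ2 (a b : Fin 3 → ℤ) : crossProduct a b 2 = a 0 * b 1 - a 1 * b 0 := by
  rw [cross_apply]; rfl

lemma cast_cross (k l : Fin 3 → ℤ) :
    intCast3 (crossProduct k l) = crossProduct (intCast3 k) (intCast3 l) := by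
  funext i
  fin_cases i
  · show ((crossProduct k l 0 : ℤ) : ℝ) = crossProduct (intCast3 k) (intCast3 l) 0
    rw [crossZ0, cross0]; push_cast [intCast3]; ring
  · show ((crossProduct k l 1 : ℤ) : ℝ) = crossProduct (intCast3 k) (intCast3 l) 1
    rw [crossZ1, cross1]; push_cast [intCast3]; ring
  · show ((crossProduct k l 2 : ℤ) : ℝ) = crossProduct (intCast3 k) (intCast3 l) 2
    rw [crossZ2, cross2]; push_cast [intCast3]; ring

lemma cast_sub (k l : Fin 3 → ℤ) : intCast3 (k - l) = intCast3 k - intCast3 l := by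
  funext i; simp [intCast3]

lemma cast_smul (m : ℤ) (k : Fin 3 → ℤ) : intCast3 (m • k) = (m : ℝ) • intCast3 k := by
  funext i; simp [intCast3]

/-! ### span lemmas -/

lemma span_cross_zero {S : Set (Fin 3 → ℤ)}
    (h : ∀ a ∈ S, ∀ b ∈ S, crossProduct a b = 0) :
    ∀ x ∈ Submodule.span ℤ S, ∀ y ∈ Submodule.span ℤ S, crossProduct x y = 0 := by
  have key : ∀ a ∈ S, ∀ y ∈ Submodule.span ℤ S, crossProduct a y = 0 := by
    intro a ha y hy
    induction hy using Submodule.span_induction with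
    | mem z hz => exact h a ha z hz
    | zero => exact map_zero (crossProduct a)
    | add z w _ _ hz hw => rw [map_add, hz, hw]; simp
    | smul r z _ hz => rw [_root_.map_smul, hz]; simp
  intro x hx y hy
  induction hx using Submodule.span_induction with
  | mem z hz => exact key z hz y hy
  | zero => exact LinearMap.map_zero₂ crossProduct y
  | add z w _ _ hz hw => rw [LinearMap.map_add₂, hz, hw]; simp
  | smul r z _ hz => rw [LinearMap.map_smul₂, hz]; simp

lemma w_ne_zero {u v : Fin 3 → ℤ}
    (hindep : ∀ a b : ℤ, a • u + b • v = 0 → a = 0 ∧ b = 0) :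
    crossProduct u v ≠ 0 := by
  intro hw
  have h0 := congrFun hw 0
  have h1 := congrFun hw 1
  have h2 := congrFun hw 2
  rw [crossZ0] at h0; rw [crossZ1] at h1; rw [crossZ2] at h2
  simp only [Pi.zero_apply] at h0 h1 h2
  by_cases hu : u = 0
  · have := hindep 1 0 (by simp [hu])
    exact one_ne_zero this.1
  · have hcomp : u 0 ≠ 0 ∨ u 1 ≠ 0 ∨ u 2 ≠ 0 := by
      by_contra h; push_neg at h
      exact hu (funext fun j => by fin_cases j <;> simp [h.1, h.2.1, h.2.2])
    rcases hcomp with h|h|h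
    · have hrel : (-(v 0)) • u + (u 0) • v = 0 := by
        funext j; fin_cases j
        · show -v 0 * u 0 + u 0 * v 0 = 0; ring
        · show -v 0 * u 1 + u 0 * v 1 = 0; linear_combination h2
        · show -v 0 * u 2 + u 0 * v 2 = 0; linear_combination -h1
      exact h (hindep _ _ hrel).2
    · have hrel : (-(v 1)) • u + (u 1) • v = 0 := by
        funext j; fin_cases j
        · show -v 1 * u 0 + u 1 * v 0 = 0; linear_combination -h2
        · show -v 1 * u 1 + u 1 * v 1 = 0; ring
        · show -v 1 * u 2 + u 1 * v 2 = 0; linear_combination h0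
      exact h (hindep _ _ hrel).2
    · have hrel : (-(v 2)) • u + (u 2) • v = 0 := by
        funext j; fin_cases j
        · show -v 2 * u 0 + u 2 * v 0 = 0; linear_combination h1
        · show -v 2 * u 1 + u 2 * v 1 = 0; linear_combination -h0
        · show -v 2 * u 2 + u 2 * v 2 = 0; ring
      exact h (hindep _ _ hrel).2

lemma det2_trans {p1 p2 q1 q2 r1 r2 : ℤ} (hr : ¬(r1 = 0 ∧ r2 = 0))
    (h1 : p1 * r2 - p2 * r1 = 0) (h2 : q1 * r2 - q2 * r1 = 0) :
    p1 * q2 - p2 * q1 = 0 := by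
  rcases (not_and_or.mp hr) with h | h
  · have h3 : (p1 * q2 - p2 * q1) * r1 = 0 := by linear_combination q1 * h1 - p1 * h2
    exact (mul_eq_zero.mp h3).resolve_right h
  · have h3 : (p1 * q2 - p2 * q1) * r2 = 0 := by linear_combination q2 * h1 - p2 * h2
    exact (mul_eq_zero.mp h3).resolve_right h

lemma cross_comb (u v : Fin 3 → ℤ) (a b c d : ℤ) :
    crossProduct (a • u + b • v) (c • u + d • v) = (a * d - b * c) • crossProduct u v := by
  have h1 : crossProduct (a • u + b • v) (c • u + d • v)
      = (a*c) • crossProduct u u + (a*d) • crossProduct u v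
        + (b*c) • crossProduct v u + (b*d) • crossProduct v v := by
    rw [LinearMap.map_add₂, LinearMap.map_smul₂, LinearMap.map_smul₂]
    rw [map_add, map_add, _root_.map_smul, _root_.map_smul, _root_.map_smul, _root_.map_smul]
    rw [smul_add, smul_add, smul_smul, smul_smul, smul_smul, smul_smul]
    abel
  rw [h1, cross_self, cross_self, ← cross_anticomm]
  simp only [smul_zero, smul_neg]
  rw [sub_smul]
  abel

lemma dotZ_cross_left (u v : Fin 3 → ℤ) : ∑ i, u i * crossProduct u v i = 0 := by
  simp only [Fin.sum_univ_three, crossZ0, crossZ1, crossZ2]; ring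

lemma dotZ_cross_right (u v : Fin 3 → ℤ) : ∑ i, v i * crossProduct u v i = 0 := by
  simp only [Fin.sum_univ_three, crossZ0, crossZ1, crossZ2]; ring

/-! ### Quadratic form lemmas -/

lemma qform_expand (A : Matrix (Fin 3) (Fin 3) ℝ) (x : Fin 3 → ℝ) :
    Qform A x = A 0 0 * x 0 * x 0 + A 0 1 * x 0 * x 1 + A 0 2 * x 0 * x 2
      + A 1 0 * x 1 * x 0 + A 1 1 * x 1 * x 1 + A 1 2 * x 1 * x 2
      + A 2 0 * x 2 * x 0 + A 2 1 * x 2 * x 1 + A 2 2 * x 2 * x 2 := by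
  simp [Qform, Fin.sum_univ_three]; ring

lemma mulvec_expand (A : Matrix (Fin 3) (Fin 3) ℝ) (x : Fin 3 → ℝ) (i : Fin 3) :
    A.mulVec x i = A i 0 * x 0 + A i 1 * x 1 + A i 2 * x 2 := by
  simp [Matrix.mulVec, dotProduct, Fin.sum_univ_three]

lemma qform_identity (A : Matrix (Fin 3) (Fin 3) ℝ) (hA : A.IsSymm) (x₀ y z : Fin 3 → ℝ) :
    Qform A y - Qform A z - Qform A (y - x₀) + Qform A (z - x₀)
      = 2 * dot3 (A.mulVec x₀) (y - z) := by
  have h01 := hA.apply 0 1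
  have h02 := hA.apply 0 2
  have h12 := hA.apply 1 2
  simp only [qform_expand, dot3_expand, mulvec_expand, Pi.sub_apply]
  linear_combination (x₀ 1 * (y 0 - z 0) - x₀ 0 * (y 1 - z 1)) * h01
    + (x₀ 2 * (y 0 - z 0) - x₀ 0 * (y 2 - z 2)) * h02
    + (x₀ 2 * (y 1 - z 1) - x₀ 1 * (y 2 - z 2)) * h12

lemma qform_nonneg (A : Matrix (Fin 3) (Fin 3) ℝ) (hApd : A.PosDef) (x : Fin 3 → ℝ) :
    0 ≤ Qform A x := by
  have h : 0 ≤ x ⬝ᵥ A.mulVec x := by simpa using hApd.posSemidef.dotProduct_mulVec_nonneg x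
  have he : x ⬝ᵥ A.mulVec x = Qform A x := by
    simp only [dotProduct, mulvec_expand, qform_expand, Fin.sum_univ_three]; ring
  linarith [he ▸ h]

lemma qform_abs_le (A : Matrix (Fin 3) (Fin 3) ℝ) (x : Fin 3 → ℝ) :
    |Qform A x| ≤ (∑ i, ∑ j, |A i j|) * dot3 x x := by
  have h1 : ∀ i, x i * x i ≤ dot3 x x := fun i =>
    Finset.single_le_sum (f := fun k => x k * x k) (fun k _ => mul_self_nonneg (x k))
      (Finset.mem_univ i)
  have hb : ∀ i j : Fin 3, |A i j * x i * x j| ≤ |A i j| * dot3 x x := by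
    intro i j
    rw [abs_mul, abs_mul, mul_assoc]
    apply mul_le_mul_of_nonneg_left ?_ (abs_nonneg _)
    nlinarith [h1 i, h1 j, sq_nonneg (|x i| - |x j|), abs_mul_abs_self (x i),
      abs_mul_abs_self (x j), abs_nonneg (x i), abs_nonneg (x j)]
  calc |Qform A x| ≤ ∑ i, |∑ j, A i j * x i * x j| := Finset.abs_sum_le_sum_abs _ _
    _ ≤ ∑ i, ∑ j, |A i j * x i * x j| :=
        Finset.sum_le_sum (fun i _ => Finset.abs_sum_le_sum_abs _ _)
    _ ≤ ∑ i, ∑ j, |A i j| * dot3 x x :=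
        Finset.sum_le_sum (fun i _ => Finset.sum_le_sum (fun j _ => hb i j))
    _ = (∑ i, ∑ j, |A i j|) * dot3 x x := by
        rw [Finset.sum_mul]; congr 1; ext i; rw [Finset.sum_mul]

/-! ### Counting lemmas -/

lemma count_sep (S : Finset ℤ) (γ L : ℝ) (hγ : 0 < γ) (hL : 0 ≤ L)
    (hsep : ∀ x ∈ S, ∀ y ∈ S, x ≠ y → γ ≤ |(x:ℝ) - y|)
    (hdiam : ∀ x ∈ S, ∀ y ∈ S, |(x:ℝ) - y| ≤ L) :
    (S.card : ℝ) ≤ L / γ + 1 := by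
  rcases S.eq_empty_or_nonempty with rfl | hne
  · simp; positivity
  set m := S.min' hne with hm
  have hmem := S.min'_mem hne
  set f : ℤ → ℤ := fun t => ⌊((t : ℝ) - m) / γ⌋ with hf
  have hmaps : ∀ t ∈ S, f t ∈ Finset.Icc (0:ℤ) ⌊L/γ⌋ := by
    intro t ht
    have h1 : (m:ℝ) ≤ t := by exact_mod_cast S.min'_le t ht
    have h2 : |(t:ℝ) - m| ≤ L := hdiam t ht m hmem
    rw [Finset.mem_Icc]
    constructor
    · exact Int.floor_nonneg.mpr (div_nonneg (by linarith) hγ.le)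
    · apply Int.floor_le_floor
      have hnum : (t:ℝ) - m ≤ L := by rw [abs_of_nonneg (by linarith)] at h2; linarith
      gcongr
  have hinj : Set.InjOn f S := by
    intro x hx y hy hxy
    by_contra hne'
    have hx' : (m:ℝ) ≤ x := by exact_mod_cast S.min'_le x hx
    have hy' : (m:ℝ) ≤ y := by exact_mod_cast S.min'_le y hy
    rcases lt_or_gt_of_ne hne' with h | h
    · have hs := hsep x hx y hy hne'
      have hxy' : (x:ℝ) ≤ y := by exact_mod_cast h.le
      have hstep : ((x:ℝ) - m)/γ + 1 ≤ ((y:ℝ) - m)/γ := by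
        rw [abs_sub_comm, abs_of_nonneg (by linarith)] at hs
        rw [div_add' _ _ _ (ne_of_gt hγ), div_le_div_iff₀ hγ hγ]
        nlinarith
      have hfl := Int.floor_le_floor ((le_of_eq (by push_cast; ring)).trans hstep :
        (((x:ℝ) - m)/γ + (1:ℤ) ≤ ((y:ℝ) - m)/γ))
      rw [Int.floor_add_intCast] at hfl
      simp only [hf] at hxy; omega
    · have hs := hsep x hx y hy hne'
      have hstep : ((y:ℝ) - m)/γ + 1 ≤ ((x:ℝ) - m)/γ := by
        have hyx' : (y:ℝ) ≤ x := by exact_mod_cast h.le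
        rw [abs_of_nonneg (by linarith)] at hs
        rw [div_add' _ _ _ (ne_of_gt hγ), div_le_div_iff₀ hγ hγ]
        nlinarith
      have hfl := Int.floor_le_floor ((le_of_eq (by push_cast; ring)).trans hstep :
        (((y:ℝ) - m)/γ + (1:ℤ) ≤ ((x:ℝ) - m)/γ))
      rw [Int.floor_add_intCast] at hfl
      simp only [hf] at hxy; omega
  have hcard : S.card ≤ (Finset.Icc (0:ℤ) ⌊L/γ⌋).card := by
    rw [← Finset.card_image_of_injOn hinj]
    exact Finset.card_le_card
      (by intro t ht; obtain ⟨x, hx, rfl⟩ := Finset.mem_image.mp ht; exact hmaps x hx)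
  have h2 : ((Finset.Icc (0:ℤ) ⌊L/γ⌋).card : ℝ) ≤ L/γ + 1 := by
    have h0 : (0:ℤ) ≤ ⌊L/γ⌋ := Int.floor_nonneg.mpr (div_nonneg hL hγ.le)
    have hcic : ((Finset.Icc (0:ℤ) ⌊L/γ⌋).card : ℤ) = ⌊L/γ⌋ + 1 := by
      rw [Int.card_Icc]; omega
    have hcr : ((Finset.Icc (0:ℤ) ⌊L/γ⌋).card : ℝ) = (⌊L/γ⌋:ℝ) + 1 := by exact_mod_cast hcic
    rw [hcr]
    have := Int.floor_le (L/γ); linarith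
  calc (S.card : ℝ) ≤ ((Finset.Icc (0:ℤ) ⌊L/γ⌋).card : ℝ) := by exact_mod_cast hcard
    _ ≤ L/γ + 1 := h2

lemma core_count (P' : Finset (Fin 3 → ℤ)) (hne : P'.Nonempty)
    (mf ξf : (Fin 3 → ℤ) → ℤ) (s2 K : ℝ) (hs2 : 0 < s2) (hK : 0 ≤ K)
    (hgap : ∀ y ∈ P', ∀ z ∈ P', mf y = mf z → y ≠ z → s2 ≤ |(ξf y : ℝ) - ξf z|)
    (hwidth : ∀ y ∈ P', ∀ z ∈ P', mf y = mf z → |(ξf y : ℝ) - ξf z| ≤ K) :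
    ∃ y₁ ∈ P', ∃ y₂ ∈ P',
      (∀ z ∈ P', mf y₂ ≤ mf z ∧ mf z ≤ mf y₁) ∧
      (P'.card : ℝ) ≤ (((mf y₁ - mf y₂ : ℤ) : ℝ) + 1) * (K / s2 + 1) := by
  classical
  set T : Finset ℤ := P'.image mf with hT
  have hTne : T.Nonempty := hne.image mf
  obtain ⟨y₁, hy₁, hy₁max⟩ : ∃ y ∈ P', mf y = T.max' hTne := by
    obtain ⟨y, hy, h⟩ := Finset.mem_image.mp (T.max'_mem hTne); exact ⟨y, hy, h⟩
  obtain ⟨y₂, hy₂, hy₂min⟩ : ∃ y ∈ P', mf y = T.min' hTne := by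
    obtain ⟨y, hy, h⟩ := Finset.mem_image.mp (T.min'_mem hTne); exact ⟨y, hy, h⟩
  refine ⟨y₁, hy₁, y₂, hy₂, ?_, ?_⟩
  · intro z hz
    have hzT : mf z ∈ T := Finset.mem_image_of_mem mf hz
    exact ⟨hy₂min ▸ T.min'_le _ hzT, hy₁max ▸ T.le_max' _ hzT⟩
  · have hfib : ∀ b ∈ T, ((P'.filter (fun a => mf a = b)).card : ℝ) ≤ K / s2 + 1 := by
      intro b hb
      set Fb := P'.filter (fun a => mf a = b) with hFb
      have hmemF : ∀ y ∈ Fb, y ∈ P' ∧ mf y = b := by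
        intro y hy; exact ⟨(Finset.mem_filter.mp hy).1, (Finset.mem_filter.mp hy).2⟩
      have hinj : Set.InjOn ξf Fb := by
        intro x hx y hy hxy
        by_contra hne'
        have h1 := hmemF x hx; have h2 := hmemF y hy
        have := hgap x h1.1 y h2.1 (h1.2.trans h2.2.symm) hne'
        rw [hxy] at this; simp at this; linarith
      have hcardeq : Fb.card = (Fb.image ξf).card := (Finset.card_image_of_injOn hinj).symm
      rw [hcardeq]
      apply count_sep _ s2 K hs2 hK
      · intro x hx y hy hxy
        obtain ⟨xa, hxa, rfl⟩ := Finset.mem_image.mp hx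
        obtain ⟨ya, hya, rfl⟩ := Finset.mem_image.mp hy
        have h1 := hmemF xa hxa; have h2 := hmemF ya hya
        exact hgap xa h1.1 ya h2.1 (h1.2.trans h2.2.symm) (fun h => hxy (by rw [h]))
      · intro x hx y hy
        obtain ⟨xa, hxa, rfl⟩ := Finset.mem_image.mp hx
        obtain ⟨ya, hya, rfl⟩ := Finset.mem_image.mp hy
        have h1 := hmemF xa hxa; have h2 := hmemF ya hya
        exact hwidth xa h1.1 ya h2.1 (h1.2.trans h2.2.symm)
    have hsum : P'.card = ∑ b ∈ T, (P'.filter (fun a => mf a = b)).card :=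
      Finset.card_eq_sum_card_fiberwise (fun x hx => Finset.mem_image_of_mem mf hx)
    have hTcard : (T.card : ℝ) ≤ ((mf y₁ - mf y₂ : ℤ) : ℝ) + 1 := by
      have hsub : T ⊆ Finset.Icc (mf y₂) (mf y₁) := by
        intro b hb
        rw [Finset.mem_Icc]
        exact ⟨hy₂min ▸ T.min'_le _ hb, hy₁max ▸ T.le_max' _ hb⟩
      have h1 : T.card ≤ (Finset.Icc (mf y₂) (mf y₁)).card := Finset.card_le_card hsub
      have h2 : ((Finset.Icc (mf y₂) (mf y₁)).card : ℤ) = mf y₁ - mf y₂ + 1 := by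
        rw [Int.card_Icc]
        have : mf y₂ ≤ mf y₁ := by
          rw [hy₂min, hy₁max]; exact (T.min'_le _ (T.max'_mem hTne))
        omega
      have h3 : ((Finset.Icc (mf y₂) (mf y₁)).card : ℝ) = ((mf y₁ - mf y₂ : ℤ):ℝ) + 1 := by
        exact_mod_cast h2
      rw [← h3]; exact_mod_cast h1
    have hpos : (0:ℝ) ≤ K / s2 + 1 := by positivity
    calc (P'.card : ℝ) = ∑ b ∈ T, ((P'.filter (fun a => mf a = b)).card : ℝ) := by
          rw [hsum]; push_cast; ring
      _ ≤ ∑ _b ∈ T, (K / s2 + 1) := Finset.sum_le_sum hfib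
      _ = (T.card : ℝ) * (K / s2 + 1) := by rw [Finset.sum_const]; simp [mul_comm]; ring
      _ ≤ (((mf y₁ - mf y₂ : ℤ) : ℝ) + 1) * (K / s2 + 1) :=
          mul_le_mul_of_nonneg_right hTcard hpos

/-! ### finiteness of the cap -/

lemma cap_finite (A : Matrix (Fin 3) (Fin 3) ℝ) (lam δ : ℝ) (x₀ : Fin 3 → ℝ) :
    (capLattice A lam δ x₀).Finite := by
  set R := Real.sqrt (lam * δ)
  apply Set.Finite.subset
    (Set.Finite.pi (t := fun i : Fin 3 => (Set.Icc (⌈x₀ i - R⌉) (⌊x₀ i + R⌋) : Set ℤ))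
      (fun i => Set.finite_Icc _ _))
  intro k hk
  have h2 := hk.2
  rw [Set.mem_pi]
  intro i _
  have hc : |(intCast3 k - x₀) i| ≤ enorm3 (intCast3 k - x₀) := comp_le_enorm3 _ i
  have hci : |(k i : ℝ) - x₀ i| ≤ enorm3 (intCast3 k - x₀) := by
    simpa [intCast3] using hc
  have hlt : |(k i : ℝ) - x₀ i| < R := lt_of_le_of_lt hci h2
  rw [abs_lt] at hlt
  constructor
  · exact Int.ceil_le.mpr (by linarith)
  · exact Int.le_floor.mpr (by linarith)

end S12
open S12 in
set_option maxHeartbeats 1000000 in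
theorem statement12 (A : Matrix (Fin 3) (Fin 3) ℝ) (hA : A.IsSymm) (hApd : A.PosDef) :
    ∃ C : ℝ, 0 < C ∧
      ∀ lam δ : ℝ, ∀ x₀ : Fin 3 → ℝ,
        1 < lam → lam⁻¹ ≤ δ → δ < 1 →
        Qform A x₀ = lam ^ 2 →
        Module.finrank ℤ ↥(capSpan A lam δ x₀) = 2 →
        ∀ u v : Fin 3 → ℤ,
          u ∈ capSpan A lam δ x₀ → v ∈ capSpan A lam δ x₀ →
          (∀ z ∈ capSpan A lam δ x₀, ∃ a b : ℤ, z = a • u + b • v) →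
          (∀ a b : ℤ, a • u + b • v = 0 → a = 0 ∧ b = 0) →
          enorm3 (intCast3 (crossProduct u v)) * (Ncap A lam δ x₀ : ℝ) ≤ C * (lam * δ) ∧
          enorm3 (crossProduct (A.mulVec x₀) (intCast3 (crossProduct u v))) ≤
            C * (lam * δ) ^ ((3:ℝ) / 2) / (Ncap A lam δ x₀ : ℝ) := by
  classical
  set Mc : ℝ := ∑ i, ∑ j, |A i j| with hMcdef
  have hMc0 : 0 ≤ Mc := by positivity
  refine ⟨100 + 100 * Mc, by positivity, ?_⟩
  intro lam δ x₀ hlam hδlow hδhi hQx₀ hrank u v hu hv hbasis hindep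
  -- ## basic positivity facts
  have hlam0 : (0:ℝ) < lam := by linarith
  have hδ0 : 0 < δ := lt_of_lt_of_le (by positivity) hδlow
  have hld1 : 1 ≤ lam * δ := by
    have h := mul_le_mul_of_nonneg_left hδlow hlam0.le
    rwa [mul_inv_cancel₀ (ne_of_gt hlam0)] at h
  have hld0 : (0:ℝ) < lam * δ := by linarith
  set R : ℝ := Real.sqrt (lam * δ) with hRdef
  have hRR : R * R = lam * δ := Real.mul_self_sqrt hld0.le
  have hR0 : 0 ≤ R := Real.sqrt_nonneg _
  have hR1 : 1 ≤ R := by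
    have h := Real.sqrt_le_sqrt hld1
    rwa [Real.sqrt_one] at h
  set E0 : ℝ := 3 + Mc with hE0def
  have hE03 : (3:ℝ) ≤ E0 := by simp [hE0def]; linarith
  have hE0pos : (0:ℝ) < E0 := by linarith
  have hE0ld : (0:ℝ) < E0 * (lam * δ) := mul_pos hE0pos hld0
  -- ## the cap as a finset
  set P : Set (Fin 3 → ℤ) := capLattice A lam δ x₀ with hPdef
  have hPfin : P.Finite := cap_finite A lam δ x₀
  set P' : Finset (Fin 3 → ℤ) := hPfin.toFinset with hP'def
  have hNcap : (Ncap A lam δ x₀ : ℝ) = (P'.card : ℝ) := by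
    rw [Ncap, Set.ncard_eq_toFinset_card _ hPfin]
  have hmemP : ∀ y ∈ P', |Real.sqrt (Qform A (intCast3 y)) - lam| < δ ∧
      enorm3 (intCast3 y - x₀) < R := by
    intro y hy
    exact hPfin.mem_toFinset.mp hy
  set g : Fin 3 → ℝ := A.mulVec x₀ with hgdef
  -- ## the linear constraint from the shell
  have hQy : ∀ y ∈ P', |Qform A (intCast3 y) - lam^2| ≤ 3 * (lam * δ) := by
    intro y hy
    obtain ⟨h1, _⟩ := hmemP y hy
    have hq0 : 0 ≤ Qform A (intCast3 y) := qform_nonneg A hApd _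
    have hsq := Real.mul_self_sqrt hq0
    have habs := abs_lt.mp h1
    have ht0 : 0 ≤ Real.sqrt (Qform A (intCast3 y)) := Real.sqrt_nonneg _
    rw [abs_le]
    constructor <;> nlinarith [habs.1, habs.2]
  have hQnear : ∀ y ∈ P', |Qform A (intCast3 y - x₀)| ≤ Mc * (lam * δ) := by
    intro y hy
    have h2 := (hmemP y hy).2
    have hd : dot3 (intCast3 y - x₀) (intCast3 y - x₀) ≤ lam * δ := by
      have hsq := enorm3_sq (intCast3 y - x₀)
      nlinarith [enorm3_nonneg (intCast3 y - x₀)]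
    calc |Qform A (intCast3 y - x₀)| ≤ Mc * dot3 (intCast3 y - x₀) (intCast3 y - x₀) :=
          qform_abs_le A _
      _ ≤ Mc * (lam * δ) := mul_le_mul_of_nonneg_left hd hMc0
  have hK2 : ∀ y ∈ P', ∀ z ∈ P', |dot3 g (intCast3 y - intCast3 z)| ≤ E0 * (lam * δ) := by
    intro y hy z hz
    have hid := qform_identity A hA x₀ (intCast3 y) (intCast3 z)
    have h1 := abs_le.mp (hQy y hy)
    have h2 := abs_le.mp (hQy z hz)
    have h3 := abs_le.mp (hQnear y hy)
    have h4 := abs_le.mp (hQnear z hz)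
    have hE0exp : E0 * (lam * δ) = 3*(lam*δ) + Mc*(lam*δ) := by rw [hE0def]; ring
    rw [abs_le]
    constructor <;> [linarith [h1.1, h2.2, h3.2, h4.1]; linarith [h1.2, h2.1, h3.1, h4.2]]
  -- ## differences and their norms
  have hdiffnorm : ∀ y ∈ P', ∀ z ∈ P',
      enorm3 (intCast3 y - intCast3 z) < 2 * R := by
    intro y hy z hz
    have h1 := (hmemP y hy).2
    have h2 := (hmemP z hz).2
    have h3 := enorm3_sub3 (intCast3 y) x₀ (intCast3 z)
    have h4 : enorm3 (x₀ - intCast3 z) = enorm3 (intCast3 z - x₀) := enorm3_sub_comm _ _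
    linarith
  have hdiffspan : ∀ y ∈ P', ∀ z ∈ P', (y - z) ∈ capSpan A lam δ x₀ := by
    intro y hy z hz
    exact Submodule.subset_span ⟨y, hPfin.mem_toFinset.mp hy, z, hPfin.mem_toFinset.mp hz, rfl⟩
  -- ## a pair of independent differences exists
  have hwZ : crossProduct u v ≠ 0 := w_ne_zero hindep
  have hexpair : ∃ ya ∈ P', ∃ za ∈ P', ∃ yb ∈ P', ∃ zb ∈ P',
      crossProduct (ya - za) (yb - zb) ≠ 0 := by
    by_contra hcon
    push_neg at hcon
    have hall : ∀ a ∈ {d | ∃ y ∈ capLattice A lam δ x₀, ∃ z ∈ capLattice A lam δ x₀, d = y - z},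
        ∀ b ∈ {d | ∃ y ∈ capLattice A lam δ x₀, ∃ z ∈ capLattice A lam δ x₀, d = y - z},
        crossProduct a b = 0 := by
      rintro a ⟨ya, hya, za, hza, rfl⟩ b ⟨yb, hyb, zb, hzb, rfl⟩
      exact hcon ya (hPfin.mem_toFinset.mpr hya) za (hPfin.mem_toFinset.mpr hza)
        yb (hPfin.mem_toFinset.mpr hyb) zb (hPfin.mem_toFinset.mpr hzb)
    exact hwZ (span_cross_zero hall u hu v hv)
  obtain ⟨ya, hya, za, hza, yb, hyb, zb, hzb, habcross⟩ := hexpair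
  have hP'ne : P'.Nonempty := ⟨ya, hya⟩
  -- ## choice of the shortest difference d₁
  set nsq : (Fin 3 → ℤ) → ℤ := fun d => ∑ i, d i * d i with hnsqdef
  set DF : Finset (Fin 3 → ℤ) :=
    ((P' ×ˢ P').filter (fun p => p.1 ≠ p.2)).image (fun p => p.1 - p.2) with hDFdef
  have hya_ne_za : ya ≠ za := by
    intro h
    apply habcross
    rw [h, sub_self]
    exact LinearMap.map_zero₂ crossProduct _
  have hDFne : DF.Nonempty := by
    refine ⟨ya - za, Finset.mem_image.mpr ⟨(ya, za), ?_, rfl⟩⟩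
    rw [Finset.mem_filter, Finset.mem_product]
    exact ⟨⟨hya, hza⟩, hya_ne_za⟩
  obtain ⟨d₁, hd₁DF, hd₁min⟩ := DF.exists_min_image nsq hDFne
  obtain ⟨pr, hpr, hd₁eq⟩ := Finset.mem_image.mp hd₁DF
  rw [Finset.mem_filter, Finset.mem_product] at hpr
  obtain ⟨⟨hp₁, hp₂⟩, hp12⟩ := hpr
  set p₁ : Fin 3 → ℤ := pr.1 with hp1def
  set p₂ : Fin 3 → ℤ := pr.2 with hp2def
  have hd₁0 : d₁ ≠ 0 := by
    rw [← hd₁eq]; exact sub_ne_zero.mpr hp12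
  have hd₁minall : ∀ y ∈ P', ∀ z ∈ P', y ≠ z → nsq d₁ ≤ nsq (y - z) := by
    intro y hy z hz hyz
    apply hd₁min
    refine Finset.mem_image.mpr ⟨(y, z), ?_, rfl⟩
    rw [Finset.mem_filter, Finset.mem_product]
    exact ⟨⟨hy, hz⟩, hyz⟩
  set d1R : Fin 3 → ℝ := intCast3 d₁ with hd1Rdef
  set s2 : ℝ := ((nsq d₁ : ℤ) : ℝ) with hs2def
  have hs2dot : dot3 d1R d1R = s2 := intdot_cast d₁ d₁
  have hs21 : (1:ℝ) ≤ s2 := by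
    have := int_nsq_ge_one hd₁0
    rw [hs2def]; exact_mod_cast this
  have hs20 : (0:ℝ) < s2 := by linarith
  set s : ℝ := enorm3 d1R with hsdef
  have hss : s * s = s2 := by rw [hsdef, enorm3_sq, hs2dot]
  have hs1 : (1:ℝ) ≤ s := enorm3_int_ge_one hd₁0
  have hs0 : (0:ℝ) < s := by linarith
  have hd1cast : d1R = intCast3 p₁ - intCast3 p₂ := by rw [hd1Rdef, ← hd₁eq, cast_sub]
  have hs2R : s < 2 * R := by
    rw [hsdef, hd1cast]; exact hdiffnorm p₁ hp₁ p₂ hp₂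
  have hs2le : s2 ≤ 2 * R * s := by nlinarith
  -- ## coefficients with respect to the basis (u, v)
  have hcfex : ∀ d : Fin 3 → ℤ, ∃ ab : ℤ × ℤ,
      d ∈ capSpan A lam δ x₀ → d = ab.1 • u + ab.2 • v := by
    intro d
    by_cases h : d ∈ capSpan A lam δ x₀
    · obtain ⟨a, b, hab⟩ := hbasis d h; exact ⟨(a, b), fun _ => hab⟩
    · exact ⟨(0, 0), fun hh => absurd hh h⟩
  choose cf hcfspec using hcfex
  have hd₁span : d₁ ∈ capSpan A lam δ x₀ := by
    rw [← hd₁eq]; exact hdiffspan p₁ hp₁ p₂ hp₂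
  set c1 : ℤ × ℤ := cf d₁ with hc1def
  have hd₁rep : d₁ = c1.1 • u + c1.2 • v := hcfspec d₁ hd₁span
  have hc1ne : ¬(c1.1 = 0 ∧ c1.2 = 0) := by
    rintro ⟨h1, h2⟩
    apply hd₁0
    rw [hd₁rep, h1, h2]; simp
  set cfn : (Fin 3 → ℤ) → ℤ × ℤ := fun y => cf (y - p₂) with hcfndef
  have hrep : ∀ y ∈ P', y - p₂ = (cfn y).1 • u + (cfn y).2 • v := by
    intro y hy
    exact hcfspec (y - p₂) (hdiffspan y hy p₂ hp₂)
  set mf : (Fin 3 → ℤ) → ℤ := fun y => (cfn y).1 * c1.2 - (cfn y).2 * c1.1 with hmfdef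
  -- representation of differences
  have hdiffrep : ∀ y ∈ P', ∀ z ∈ P',
      y - z = ((cfn y).1 - (cfn z).1) • u + ((cfn y).2 - (cfn z).2) • v := by
    intro y hy z hz
    have h1 := hrep y hy
    have h2 := hrep z hz
    have h3 : y - z = (y - p₂) - (z - p₂) := by abel
    rw [h3, h1, h2, sub_smul, sub_smul]; abel
  have hcrossm : ∀ y ∈ P', ∀ z ∈ P',
      crossProduct (y - z) d₁ = (mf y - mf z) • crossProduct u v := by
    intro y hy z hz
    rw [hdiffrep y hy z hz, hd₁rep, cross_comb]
    congr 1
    simp only [hmfdef]; ring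
  -- general pairs of differences
  have hcrossgen : ∀ y ∈ P', ∀ z ∈ P', ∀ y' ∈ P', ∀ z' ∈ P',
      crossProduct (y - z) (y' - z')
        = (((cfn y).1 - (cfn z).1) * ((cfn y').2 - (cfn z').2)
            - ((cfn y).2 - (cfn z).2) * ((cfn y').1 - (cfn z').1)) • crossProduct u v := by
    intro y hy z hz y' hy' z' hz'
    rw [hdiffrep y hy z hz, hdiffrep y' hy' z' hz', cross_comb]
  set wZ : Fin 3 → ℤ := crossProduct u v with hwZdef
  set wR : Fin 3 → ℝ := intCast3 wZ with hwRdef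
  set nw : ℝ := enorm3 wR with hnwdef
  have hnw1 : (1:ℝ) ≤ nw := enorm3_int_ge_one hwZ
  have hnw0 : (0:ℝ) < nw := by linarith
  -- real versions
  have hcrossmR : ∀ y ∈ P', ∀ z ∈ P',
      crossProduct (intCast3 y - intCast3 z) d1R = ((mf y - mf z : ℤ) : ℝ) • wR := by
    intro y hy z hz
    rw [← cast_sub, hd1Rdef, ← cast_cross, hcrossm y hy z hz, cast_smul]
  set ξf : (Fin 3 → ℤ) → ℤ := fun y => ∑ i, (y i - p₂ i) * d₁ i with hξfdef
  have hξcast : ∀ y z : Fin 3 → ℤ,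
      dot3 (intCast3 y - intCast3 z) d1R = ((ξf y - ξf z : ℤ) : ℝ) := by
    intro y z
    simp only [hξfdef, dot3, hd1Rdef, intCast3, Pi.sub_apply, Fin.sum_univ_three]
    push_cast
    ring
  -- the key (★) identity
  set e2 : Fin 3 → ℝ := crossProduct wR d1R with he2def
  have hstar : ∀ y ∈ P', ∀ z ∈ P',
      dot3 g (intCast3 y - intCast3 z) * s2
        = dot3 g d1R * ((ξf y - ξf z : ℤ) : ℝ) - ((mf y - mf z : ℤ) : ℝ) * dot3 g e2 := by
    intro y hy z hz
    have hb := binet g (intCast3 y - intCast3 z) d1R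
    rw [hcrossmR y hy z hz, dot3_smul_right] at hb
    have hc : dot3 (crossProduct g d1R) wR = - dot3 g e2 :=
      (cyclic g d1R wR).trans (crossswap g d1R wR)
    rw [hc, hs2dot, hξcast y z] at hb
    linarith only [hb]
  set a' : ℝ := |dot3 g d1R| with ha'def
  set b' : ℝ := |dot3 g e2| with hb'def
  have ha'0 : 0 ≤ a' := abs_nonneg _
  have hb'0 : 0 ≤ b' := abs_nonneg _
  have ha' : a' ≤ E0 * (lam * δ) := by
    rw [ha'def, hd1cast]
    exact hK2 p₁ hp₁ p₂ hp₂
  -- ## widths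
  have hξwidth : ∀ y ∈ P', ∀ z ∈ P', |((ξf y - ξf z : ℤ) : ℝ)| ≤ 2 * R * s := by
    intro y hy z hz
    rw [← hξcast y z]
    calc |dot3 (intCast3 y - intCast3 z) d1R|
        ≤ enorm3 (intCast3 y - intCast3 z) * enorm3 d1R := cs3 _ _
      _ ≤ (2 * R) * s := by
          apply mul_le_mul_of_nonneg_right (hdiffnorm y hy z hz).le (enorm3_nonneg _)
  -- same-fiber pairs: strong gap and width
  have hfiber_cross : ∀ y ∈ P', ∀ z ∈ P', mf y = mf z →
      crossProduct (intCast3 y - intCast3 z) d1R = 0 := by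
    intro y hy z hz hm
    rw [hcrossmR y hy z hz, hm]
    simp
  have hgap : ∀ y ∈ P', ∀ z ∈ P', mf y = mf z → y ≠ z →
      s2 ≤ |((ξf y : ℤ) : ℝ) - ((ξf z : ℤ) : ℝ)| := by
    intro y hy z hz hm hyz
    have hcz := hfiber_cross y hy z hz hm
    have hlag := lagrange (intCast3 y - intCast3 z) d1R
    rw [hcz, dot3_zero_right, hs2dot] at hlag
    have hdot : dot3 (intCast3 y - intCast3 z) (intCast3 y - intCast3 z)
        = ((nsq (y - z) : ℤ) : ℝ) := by
      rw [← cast_sub]; exact intdot_cast _ _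
    have hmin : s2 ≤ ((nsq (y - z) : ℤ) : ℝ) := by
      rw [hs2def]; exact_mod_cast hd₁minall y hy z hz hyz
    have hsq : s2 * s2 ≤ (dot3 (intCast3 y - intCast3 z) d1R)^2 := by
      have h2 : s2 * s2 ≤ dot3 (intCast3 y - intCast3 z) (intCast3 y - intCast3 z) * s2 :=
        mul_le_mul_of_nonneg_right (hdot ▸ hmin) hs20.le
      linarith only [hlag, h2]
    have habs : s2 ≤ |dot3 (intCast3 y - intCast3 z) d1R| := by
      have h3 : s2 = Real.sqrt (s2 * s2) := (Real.sqrt_mul_self hs20.le).symm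
      rw [h3, ← Real.sqrt_sq_eq_abs]
      exact Real.sqrt_le_sqrt (by linarith only [hsq])
    rw [hξcast y z] at habs
    calc s2 ≤ |((ξf y - ξf z : ℤ) : ℝ)| := habs
      _ = |((ξf y : ℤ) : ℝ) - ((ξf z : ℤ) : ℝ)| := by norm_cast
  -- ## the per-line width K
  obtain ⟨K, hK0, hKle2Rs, haK, hKwidth⟩ :
      ∃ K : ℝ, 0 ≤ K ∧ K ≤ 2*R*s ∧ a' * K ≤ E0*(lam*δ)*s2 ∧
        (∀ y ∈ P', ∀ z ∈ P', mf y = mf z →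
          |((ξf y : ℤ):ℝ) - ((ξf z : ℤ):ℝ)| ≤ K) := by
    by_cases hcase : a' * (2*R*s) ≤ E0*(lam*δ)*s2
    · refine ⟨2*R*s, by positivity, le_refl _, hcase, ?_⟩
      intro y hy z hz _
      have h := hξwidth y hy z hz
      calc |((ξf y : ℤ):ℝ) - ((ξf z : ℤ):ℝ)| = |((ξf y - ξf z : ℤ):ℝ)| := by norm_cast
        _ ≤ 2*R*s := h
    · push_neg at hcase
      have ha'pos : 0 < a' := by
        rcases lt_or_eq_of_le ha'0 with h | h
        · exact h
        · exfalso
          rw [← h] at hcase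
          simp at hcase
          have : (0:ℝ) < E0*(lam*δ)*s2 := by positivity
          linarith only [this, hcase]
      refine ⟨E0*(lam*δ)*s2/a', by positivity, ?_, ?_, ?_⟩
      · rw [div_le_iff₀ ha'pos]
        have hcomm : a' * (2*R*s) = 2*R*s*a' := by ring
        linarith only [hcase, hcomm]
      · rw [mul_div_cancel₀ _ (ne_of_gt ha'pos)]
      · intro y hy z hz hm
        have hst := hstar y hy z hz
        rw [hm, sub_self] at hst
        simp only [Int.cast_zero, zero_mul, sub_zero] at hst
        have hk2 := hK2 y hy z hz
        have habs : a' * |((ξf y - ξf z : ℤ):ℝ)| ≤ E0*(lam*δ)*s2 := by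
          have h1 : a' * |((ξf y - ξf z : ℤ):ℝ)| = |dot3 g (intCast3 y - intCast3 z) * s2| := by
            rw [hst, abs_mul, ha'def]
          rw [h1, abs_mul, abs_of_nonneg hs20.le]
          exact mul_le_mul_of_nonneg_right hk2 hs20.le
        have h2 : |((ξf y : ℤ):ℝ) - ((ξf z : ℤ):ℝ)| = |((ξf y - ξf z : ℤ):ℝ)| := by norm_cast
        rw [h2, ← mul_le_mul_iff_right₀ ha'pos]
        calc a' * |((ξf y - ξf z : ℤ):ℝ)| ≤ E0*(lam*δ)*s2 := habs
          _ = a' * (E0*(lam*δ)*s2/a') := by field_simp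
  -- ## apply the counting lemma
  obtain ⟨y₁, hy₁, y₂, hy₂, hsand, hcard⟩ :=
    core_count P' hP'ne mf ξf s2 K hs20 hK0 hgap hKwidth
  set H : ℝ := ((mf y₁ - mf y₂ : ℤ) : ℝ) with hHdef
  have hHint0 : (0:ℤ) ≤ mf y₁ - mf y₂ := by
    have h := hsand y₁ hy₁
    omega
  have hH0 : 0 ≤ H := by rw [hHdef]; exact_mod_cast hHint0
  -- H ≥ 1: not all m-values are equal
  have hne_m : ∃ w1 ∈ P', ∃ w2 ∈ P', mf w1 ≠ mf w2 := by
    by_contra hcon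
    push_neg at hcon
    apply habcross
    rw [hcrossgen ya hya za hza yb hyb zb hzb]
    have hDa : ((cfn ya).1 - (cfn za).1) * c1.2 - ((cfn ya).2 - (cfn za).2) * c1.1 = 0 := by
      have h := hcon ya hya za hza
      simp only [hmfdef] at h
      linear_combination h
    have hDb : ((cfn yb).1 - (cfn zb).1) * c1.2 - ((cfn yb).2 - (cfn zb).2) * c1.1 = 0 := by
      have h := hcon yb hyb zb hzb
      simp only [hmfdef] at h
      linear_combination h
    have hD := det2_trans hc1ne hDa hDb
    rw [hD]
    simp
  obtain ⟨w1, hw1, w2, hw2, hww⟩ := hne_m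
  have hH1 : 1 ≤ H := by
    have h1 := hsand w1 hw1
    have h2 := hsand w2 hw2
    have h3 : (1:ℤ) ≤ mf y₁ - mf y₂ := by omega
    rw [hHdef]; exact_mod_cast h3
  -- bounds from the extremal pair
  have hHnw : H * nw ≤ 2 * R * s := by
    have hcr := hcrossmR y₁ hy₁ y₂ hy₂
    have h1 : enorm3 (crossProduct (intCast3 y₁ - intCast3 y₂) d1R) = H * nw := by
      rw [hcr, enorm3_smul, ← hHdef, abs_of_nonneg hH0]
    have h2 : enorm3 (crossProduct (intCast3 y₁ - intCast3 y₂) d1R)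
        ≤ enorm3 (intCast3 y₁ - intCast3 y₂) * s := enorm3_cross_le _ _
    have h3 := hdiffnorm y₁ hy₁ y₂ hy₂
    have h4 : enorm3 (intCast3 y₁ - intCast3 y₂) * s ≤ 2*R*s :=
      mul_le_mul_of_nonneg_right h3.le hs0.le
    linarith only [h1, h2, h4]
  have hbH : b' * H ≤ E0*(lam*δ)*s2 + a' * (2 * R * s) := by
    have hst := hstar y₁ hy₁ y₂ hy₂
    have hk2 := hK2 y₁ hy₁ y₂ hy₂
    have hξw := hξwidth y₁ hy₁ y₂ hy₂
    have e1 : b' * H = |((mf y₁ - mf y₂ : ℤ):ℝ) * dot3 g e2| := by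
      rw [abs_mul, ← hHdef, abs_of_nonneg hH0, hb'def]; ring
    have e2' : ((mf y₁ - mf y₂ : ℤ):ℝ) * dot3 g e2
        = dot3 g d1R * ((ξf y₁ - ξf y₂ : ℤ):ℝ) - dot3 g (intCast3 y₁ - intCast3 y₂) * s2 := by
      linarith only [hst]
    have e3 : |dot3 g d1R * ((ξf y₁ - ξf y₂ : ℤ):ℝ)| ≤ a' * (2*R*s) := by
      rw [abs_mul, ← ha'def]
      exact mul_le_mul_of_nonneg_left hξw ha'0
    have e4 : |dot3 g (intCast3 y₁ - intCast3 y₂) * s2| ≤ E0*(lam*δ)*s2 := by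
      rw [abs_mul, abs_of_nonneg hs20.le]
      exact mul_le_mul_of_nonneg_right hk2 hs20.le
    calc b' * H = |((mf y₁ - mf y₂ : ℤ):ℝ) * dot3 g e2| := e1
      _ = |dot3 g d1R * ((ξf y₁ - ξf y₂ : ℤ):ℝ)
            - dot3 g (intCast3 y₁ - intCast3 y₂) * s2| := by rw [e2']
      _ ≤ |dot3 g d1R * ((ξf y₁ - ξf y₂ : ℤ):ℝ)|
            + |dot3 g (intCast3 y₁ - intCast3 y₂) * s2| := abs_sub _ _
      _ ≤ a' * (2*R*s) + E0*(lam*δ)*s2 := add_le_add e3 e4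
      _ = E0*(lam*δ)*s2 + a' * (2*R*s) := by ring
  -- ## main counting bound
  set N : ℝ := (P'.card : ℝ) with hNdef
  have hN0 : 0 < N := by
    rw [hNdef]
    exact_mod_cast Finset.card_pos.mpr hP'ne
  have hNle : N * s2 ≤ 2 * H * (K + s2) := by
    have h1 : N ≤ (H + 1) * (K/s2 + 1) := hcard
    have h2 : H + 1 ≤ 2*H := by linarith only [hH1]
    have h3 : (K/s2 + 1) * s2 = K + s2 := by field_simp
    have h4 : 0 ≤ K + s2 := by linarith only [hK0, hs21]
    calc N * s2 ≤ ((H+1)*(K/s2+1))*s2 := mul_le_mul_of_nonneg_right h1 hs20.le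
      _ = (H+1)*(K+s2) := by rw [mul_assoc, h3]
      _ ≤ 2*H*(K+s2) := mul_le_mul_of_nonneg_right h2 h4
  -- ## Part 1
  have hKs2 : K + s2 ≤ 4*R*s := by linarith only [hKle2Rs, hs2le]
  have hHnw0 : 0 ≤ H * nw := mul_nonneg hH0 (by linarith only [hnw1])
  have hpart1 : nw * N ≤ 16 * (lam * δ) := by
    have h1 : nw * (N * s2) ≤ nw * (2*H*(K+s2)) :=
      mul_le_mul_of_nonneg_left hNle (by linarith only [hnw1])
    have h2 : nw * (2*H*(K+s2)) = 2*((H*nw)*(K+s2)) := by ring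
    have h4 : (H*nw)*(K+s2) ≤ (2*R*s)*(4*R*s) :=
      mul_le_mul hHnw hKs2 (by linarith only [hK0, hs21]) (by positivity)
    have h5 : 2*((2*R*s)*(4*R*s)) = 16*(lam*δ)*s2 := by
      rw [← hRR, ← hss]; ring
    have h6 : nw * N * s2 ≤ 16*(lam*δ)*s2 := by
      have := mul_assoc nw N s2
      linarith only [h1, h2, h4, h5, this]
    exact le_of_mul_le_mul_right h6 hs20
  constructor
  · rw [hNcap]
    have h7 : 16 * (lam*δ) ≤ (100+100*Mc)*(lam*δ) :=
      mul_le_mul_of_nonneg_right (by linarith only [hMc0]) hld0.le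
    calc nw * N ≤ 16*(lam*δ) := hpart1
      _ ≤ (100+100*Mc)*(lam*δ) := h7
  -- ## Part 2
  · have haN : (a'*nw) * (N * s2) ≤ 8 * (E0*(lam*δ)) * R * s * s2 := by
      have q1 : (a'*nw) * (N*s2) ≤ (a'*nw) * (2*H*(K+s2)) :=
        mul_le_mul_of_nonneg_left hNle (by positivity)
      have q2 : a'*(K+s2) ≤ 2*(E0*(lam*δ))*s2 := by
        have h1 : a'*s2 ≤ (E0*(lam*δ))*s2 := mul_le_mul_of_nonneg_right ha' hs20.le
        have h2 : a'*(K+s2) = a'*K + a'*s2 := by ring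
        linarith only [haK, h1, h2]
      have q3 : (a'*nw)*(2*H*(K+s2)) = 2*((H*nw)*(a'*(K+s2))) := by ring
      have q4 : (H*nw)*(a'*(K+s2)) ≤ (2*R*s)*(2*(E0*(lam*δ))*s2) :=
        mul_le_mul hHnw q2 (mul_nonneg ha'0 (by linarith only [hK0, hs21])) (by positivity)
      have q5 : 2*((2*R*s)*(2*(E0*(lam*δ))*s2)) = 8*(E0*(lam*δ))*R*s*s2 := by ring
      linarith only [q1, q3, q4, q5]
    have hbN : b' * (N * s2) ≤ 16 * (E0*(lam*δ)) * R * s * s2 := by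
      have q1 : b' * (N*s2) ≤ b' * (2*H*(K+s2)) :=
        mul_le_mul_of_nonneg_left hNle hb'0
      have q2 : b' * (2*H*(K+s2)) = 2*((b'*H)*(K+s2)) := by ring
      have q3 : (b'*H)*(K+s2) ≤ (E0*(lam*δ)*s2 + a'*(2*R*s))*(K+s2) :=
        mul_le_mul_of_nonneg_right hbH (by linarith only [hK0, hs21])
      have t1 : (E0*(lam*δ)*s2)*K ≤ (E0*(lam*δ)*s2)*(2*R*s) :=
        mul_le_mul_of_nonneg_left hKle2Rs (by positivity)
      have t2 : (E0*(lam*δ)*s2)*s2 ≤ (E0*(lam*δ)*s2)*(2*R*s) :=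
        mul_le_mul_of_nonneg_left hs2le (by positivity)
      have t3 : (2*R*s)*(a'*K) ≤ (2*R*s)*(E0*(lam*δ)*s2) :=
        mul_le_mul_of_nonneg_left haK (by positivity)
      have t4 : (2*R*s)*(a'*s2) ≤ (2*R*s)*((E0*(lam*δ))*s2) :=
        mul_le_mul_of_nonneg_left (mul_le_mul_of_nonneg_right ha' hs20.le) (by positivity)
      have e1 : (E0*(lam*δ)*s2 + a'*(2*R*s))*(K+s2)
          = (E0*(lam*δ)*s2)*K + (E0*(lam*δ)*s2)*s2 + (2*R*s)*(a'*K) + (2*R*s)*(a'*s2) := by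
        ring
      have e2 : (E0*(lam*δ)*s2)*(2*R*s) + (E0*(lam*δ)*s2)*(2*R*s)
            + (2*R*s)*(E0*(lam*δ)*s2) + (2*R*s)*((E0*(lam*δ))*s2)
          = 8*(E0*(lam*δ))*R*s*s2 := by ring
      linarith only [q1, q2, q3, t1, t2, t3, t4, e1, e2]
    have hsumN : (a'*nw + b') * N ≤ 24 * (E0*(lam*δ)) * R * s := by
      have h1 : ((a'*nw + b') * N) * s2 ≤ (24 * (E0*(lam*δ)) * R * s) * s2 := by
        have e1 : ((a'*nw + b') * N) * s2 = (a'*nw)*(N*s2) + b'*(N*s2) := by ring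
        have e2 : (24 * (E0*(lam*δ)) * R * s) * s2
            = 8*(E0*(lam*δ))*R*s*s2 + 16*(E0*(lam*δ))*R*s*s2 := by ring
        linarith only [haN, hbN, e1, e2]
      exact le_of_mul_le_mul_right h1 hs20
    -- orthogonality d₁ ⊥ w
    have horthZ : (∑ i, d₁ i * wZ i : ℤ) = 0 := by
      have h1 : ∀ i, d₁ i = c1.1 * u i + c1.2 * v i := by
        intro i
        have := congrFun hd₁rep i
        simpa using this
      have h2 : (∑ i, d₁ i * wZ i : ℤ)
          = c1.1 * (∑ i, u i * wZ i) + c1.2 * (∑ i, v i * wZ i) := by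
        simp only [Finset.mul_sum, ← Finset.sum_add_distrib]
        apply Finset.sum_congr rfl
        intro i _
        rw [h1 i]; ring
      rw [h2, hwZdef, dotZ_cross_left, dotZ_cross_right]
      ring
    have horth : dot3 d1R wR = 0 := by
      rw [hd1Rdef, hwRdef, intdot_cast]
      exact_mod_cast horthZ
    have hkey := keyid g wR d1R horth
    rw [hs2dot] at hkey
    -- (enorm3 (cross g wR) * s)² = b'² + a'²nw²
    have hsq2 : (enorm3 (crossProduct g wR) * s)^2 = b'^2 + a'^2 * nw^2 := by
      have e1 : (dot3 g e2)^2 = b'^2 := (sq_abs _).symm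
      have e2' : (dot3 g d1R)^2 = a'^2 := (sq_abs _).symm
      have e3 : dot3 wR wR = nw^2 := by rw [sq]; exact (enorm3_sq wR).symm
      have e4 : dot3 (crossProduct g wR) (crossProduct g wR)
          = (enorm3 (crossProduct g wR))^2 := by rw [sq]; exact (enorm3_sq _).symm
      have e5 : s2 = s^2 := by rw [sq]; exact hss.symm
      rw [← he2def, e1, e2', e3, e4, e5] at hkey
      linear_combination hkey
    have hx0 : 0 ≤ enorm3 (crossProduct g wR) * s := mul_nonneg (enorm3_nonneg _) hs0.le
    have hy0 : 0 ≤ a'*nw + b' := by positivity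
    have hid2 : enorm3 (crossProduct g wR) * s ≤ a'*nw + b' := by
      have h1 : (enorm3 (crossProduct g wR) * s)^2 ≤ (a'*nw + b')^2 := by
        have h2 : 0 ≤ 2*(a'*nw)*b' := by positivity
        have h3 : (a'*nw + b')^2 = a'^2*nw^2 + 2*(a'*nw)*b' + b'^2 := by ring
        linarith only [hsq2, h2, h3]
      have h4 := Real.sqrt_le_sqrt h1
      rwa [Real.sqrt_sq hx0, Real.sqrt_sq hy0] at h4
    -- combine
    have hfinal : enorm3 (crossProduct g wR) * N ≤ 24 * (E0*(lam*δ)) * R := by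
      have h1 : (enorm3 (crossProduct g wR) * N) * s ≤ (24 * (E0*(lam*δ)) * R) * s := by
        have h2 : (enorm3 (crossProduct g wR) * s) * N ≤ (a'*nw + b') * N :=
          mul_le_mul_of_nonneg_right hid2 hN0.le
        have e1 : (enorm3 (crossProduct g wR) * N) * s
            = (enorm3 (crossProduct g wR) * s) * N := by ring
        have e2 : (24 * (E0*(lam*δ)) * R) * s = 24 * (E0*(lam*δ)) * R * s := by ring
        linarith only [h2, hsumN, e1, e2]
      exact le_of_mul_le_mul_right h1 hs0
    rw [hNcap, le_div_iff₀ hN0]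
    have hpow : (lam*δ) ^ ((3:ℝ)/2) = (lam*δ) * R := by
      rw [hRdef, Real.sqrt_eq_rpow,
        show ((3:ℝ)/2) = 1 + 1/2 by norm_num, Real.rpow_add hld0, Real.rpow_one]
    rw [hpow]
    have h28 : 24*E0 ≤ 100+100*Mc := by rw [hE0def]; linarith only [hMc0]
    have hldR : 0 ≤ (lam*δ)*R := by positivity
    have h29 : 24 * (E0*(lam*δ)) * R = (24*E0)*((lam*δ)*R) := by ring
    calc enorm3 (crossProduct g wR) * N ≤ 24 * (E0*(lam*δ)) * R := hfinal
      _ = (24*E0)*((lam*δ)*R) := h29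
      _ ≤ (100+100*Mc)*((lam*δ)*R) := mul_le_mul_of_nonneg_right h28 hldR
end
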